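/- Let V: ℝ^n → ℝ be V(x) = xᵀPx with P symmetric positive definite, and suppose along all solutions of a linear ODE ẋ = Ax we have V̇(x) = xᵀ(AᵀP + PA)x ≤ -ρ‖Cx‖² for some ρ > 0 and matrix C, together with the property that the largest invariant set contained in {x : Cx = 0} is {0}. Then the origin is asymptotically stable (all solutions converge to 0). -/

import Mathlib

/-!
Along a solution `x` of `ẋ = Ax`, `V(x t) = x tᵀ P x t` is nonincreasing, so `x` stays in a
sublevel set of `V`, which is compact because `P ≻ 0`, and `V(x t)` converges to some `L`.
If `y` is an ω-limit point of `x`, continuity of the flow `e^{sA}` shows that `V(e^{sA} y) = L`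
for every `s`; differentiating, `ρ ‖C e^{sA} y‖² ≤ 0`, so the solution through `y` stays in
`{Cx = 0}` and hence `y = 0`. A trajectory in a compact set with `0` as its only ω-limit point
tends to `0`.
-/

open Matrix Filter Topology NormedSpace

theorem apply_eq_of_mapClusterPt_of_tendsto_comp {E F : Type*} [TopologicalSpace E]
    [TopologicalSpace F] [T2Space F] {x : ℝ → E} {φ : ℝ → E → E}
    (hφ : ∀ s, Continuous (φ s)) (hx : ∀ t s, x (t + s) = φ s (x t))
    {V : E → F} (hV : Continuous V) {L : F} (hVx : Tendsto (V ∘ x) atTop (𝓝 L))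
    {y : E} (hy : MapClusterPt y atTop x) (s : ℝ) : V (φ s y) = L := by
  have hshift : Tendsto (fun t => V (x (t + s))) atTop (𝓝 L) :=
    hVx.comp (tendsto_atTop_add_const_right _ s tendsto_id)
  have hcluster : MapClusterPt (V (φ s y)) atTop (fun t => V (x (t + s))) := by
    simp_rw [hx]
    exact hy.continuousAt_comp (hV.comp (hφ s)).continuousAt (f := V ∘ φ s)
  exact eq_of_nhds_neBot (hcluster.clusterPt.mono hshift)

section LinearFlow

variable {E : Type*} [NormedAddCommGroup E] [NormedSpace ℝ E] [CompleteSpace E] (T : E →L[ℝ] E)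

theorem hasDerivAt_exp_smul_apply (v : E) (t : ℝ) :
    HasDerivAt (fun s : ℝ => exp (s • T) v) (T (exp (t • T) v)) t :=
  (ContinuousLinearMap.apply ℝ E v).hasFDerivAt.comp_hasDerivAt t (hasDerivAt_exp_smul_const' T t)

theorem eq_exp_smul_apply_of_hasDerivAt {x : ℝ → E} (hx : ∀ t, HasDerivAt x (T (x t)) t)
    (t s : ℝ) : x (t + s) = exp (s • T) (x t) := by
  have h := ODE_solution_unique_univ (v := fun _ => T) (s := fun _ => Set.univ) (t₀ := 0)
    (f := fun s => x (t + s)) (g := fun s => exp (s • T) (x t))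
    (fun _ => T.lipschitz.lipschitzOnWith)
    (fun s => ⟨(hx (t + s)).comp_const_add t s, trivial⟩)
    (fun s => ⟨hasDerivAt_exp_smul_apply T (x t) s, trivial⟩) (by simp)
  exact congrFun h s

end LinearFlow

section QuadraticForm

variable {ι : Type*} [Fintype ι]

theorem HasDerivAt.dotProduct {𝕜 : Type*} [NontriviallyNormedField 𝕜] {u v : 𝕜 → ι → 𝕜}
    {u' v' : ι → 𝕜} {t : 𝕜} (hu : HasDerivAt u u' t) (hv : HasDerivAt v v' t) :
    HasDerivAt (fun s => u s ⬝ᵥ v s) (u' ⬝ᵥ v t + u t ⬝ᵥ v') t := by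
  have h := HasDerivAt.fun_sum fun i (_ : i ∈ Finset.univ) =>
    (hasDerivAt_pi.1 hu i).fun_mul (hasDerivAt_pi.1 hv i)
  simp only [Finset.sum_add_distrib] at h
  exact h

theorem HasDerivAt.matrix_mulVec {𝕜 : Type*} [NontriviallyNormedField 𝕜] {κ : Type*}
    (M : Matrix κ ι 𝕜) {u : 𝕜 → ι → 𝕜} {u' : ι → 𝕜} {t : 𝕜} (hu : HasDerivAt u u' t) :
    HasDerivAt (fun s => M *ᵥ u s) (M *ᵥ u') t :=
  hasDerivAt_pi.2 fun i => by
    simpa [mulVec] using (hasDerivAt_const t (M i)).dotProduct hu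

theorem dotProduct_mulVec_add_dotProduct_mulVec (A P : Matrix ι ι ℝ) (v : ι → ℝ) :
    A *ᵥ v ⬝ᵥ P *ᵥ v + v ⬝ᵥ P *ᵥ (A *ᵥ v) = v ⬝ᵥ (Aᵀ * P + P * A) *ᵥ v := by
  rw [add_mulVec, dotProduct_add, ← mulVec_mulVec, ← mulVec_mulVec,
    dotProduct_mulVec v Aᵀ, vecMul_transpose]

theorem hasDerivAt_dotProduct_mulVec_self (A P : Matrix ι ι ℝ) {x : ℝ → ι → ℝ} {t : ℝ}
    (hx : HasDerivAt x (A *ᵥ x t) t) :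
    HasDerivAt (fun s => x s ⬝ᵥ P *ᵥ x s) (x t ⬝ᵥ (Aᵀ * P + P * A) *ᵥ x t) t := by
  rw [← dotProduct_mulVec_add_dotProduct_mulVec]
  exact hx.dotProduct (hx.matrix_mulVec P)

theorem Matrix.PosDef.exists_pos_mul_sq_norm_le {P : Matrix ι ι ℝ} (hP : P.PosDef) :
    ∃ c > 0, ∀ v : ι → ℝ, c * ‖v‖ ^ 2 ≤ v ⬝ᵥ P *ᵥ v := by
  obtain ⟨c, hc, hsphere⟩ := (isCompact_sphere (0 : ι → ℝ) 1).exists_forall_le'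
    (f := fun v => v ⬝ᵥ P *ᵥ v) (by fun_prop) fun v hv => by
      simpa using hP.dotProduct_mulVec_pos (ne_zero_of_mem_unit_sphere ⟨v, hv⟩)
  refine ⟨c, hc, fun v => ?_⟩
  rcases eq_or_ne v 0 with rfl | hv
  · simp
  have hnorm : ‖v‖ ≠ 0 := norm_ne_zero_iff.2 hv
  have hw : ‖v‖⁻¹ • v ∈ Metric.sphere (0 : ι → ℝ) 1 := by
    simp [norm_smul, hnorm]
  calc c * ‖v‖ ^ 2 ≤ (‖v‖⁻¹ • v) ⬝ᵥ P *ᵥ (‖v‖⁻¹ • v) * ‖v‖ ^ 2 := by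
        gcongr; exact hsphere _ hw
    _ = v ⬝ᵥ P *ᵥ v := by
      rw [mulVec_smul, smul_dotProduct, dotProduct_smul, smul_eq_mul, smul_eq_mul]
      field_simp

theorem Matrix.PosDef.isCompact_setOf_dotProduct_mulVec_le {P : Matrix ι ι ℝ} (hP : P.PosDef)
    (K : ℝ) : IsCompact {v : ι → ℝ | v ⬝ᵥ P *ᵥ v ≤ K} := by
  obtain ⟨c, hc, hcoercive⟩ := hP.exists_pos_mul_sq_norm_le
  refine Metric.isCompact_of_isClosed_isBounded (isClosed_le (by fun_prop) continuous_const) ?_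
  refine (Metric.isBounded_closedBall (x := 0) (r := √(K / c))).subset fun v (hv : _ ≤ K) => ?_
  have hsq : ‖v‖ ^ 2 ≤ K / c := by
    rw [le_div_iff₀ hc]
    linarith [hcoercive v]
  simpa using Real.abs_le_sqrt hsq

end QuadraticForm

/-- LaSalle's invariance principle for linear systems: if `V(x) = xᵀPx` with
`P ≻ 0` satisfies `V̇ = xᵀ(AᵀP+PA)x ≤ −ρ‖Cx‖²` and the largest invariant set
contained in `{x : Cx = 0}` is `{0}`, then every solution of `ẋ = Ax`
converges to the origin. -/
theorem lasalle_linear_asymptotic_stability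
    {n p : ℕ} (A : Matrix (Fin n) (Fin n) ℝ) (C : Matrix (Fin p) (Fin n) ℝ)
    (P : Matrix (Fin n) (Fin n) ℝ) (ρ : ℝ)
    (hP : P.PosDef) (hρ : 0 < ρ)
    (hdiss : ∀ v : Fin n → ℝ,
      v ⬝ᵥ (Aᵀ * P + P * A).mulVec v ≤ -ρ * (C.mulVec v ⬝ᵥ C.mulVec v))
    (hinv : ∀ x : ℝ → Fin n → ℝ,
      (∀ t, HasDerivAt x (A.mulVec (x t)) t) →
      (∀ t, C.mulVec (x t) = 0) → ∀ t, x t = 0) :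
    ∀ x : ℝ → Fin n → ℝ,
      (∀ t, HasDerivAt x (A.mulVec (x t)) t) →
      Tendsto x atTop (nhds 0) := by
  intro x hx
  let T : (Fin n → ℝ) →L[ℝ] (Fin n → ℝ) := LinearMap.toContinuousLinearMap A.mulVecLin
  let V : (Fin n → ℝ) → ℝ := fun v => v ⬝ᵥ P *ᵥ v
  have hV : Continuous V := by fun_prop
  have hCsq (v : Fin n → ℝ) : 0 ≤ C *ᵥ v ⬝ᵥ C *ᵥ v := by
    simpa using dotProduct_self_star_nonneg (C *ᵥ v)
  have hVx : Antitone (V ∘ x) :=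
    antitone_of_hasDerivAt_nonpos (fun t => hasDerivAt_dotProduct_mulVec_self A P (hx t))
      fun t => (hdiss (x t)).trans (by nlinarith [hCsq (x t)] : -ρ * _ ≤ 0)
  obtain ⟨L, hL⟩ : ∃ L, Tendsto (V ∘ x) atTop (𝓝 L) :=
    ⟨_, tendsto_atTop_ciInf hVx ⟨0, by
      rintro _ ⟨t, rfl⟩
      simpa using hP.posSemidef.dotProduct_mulVec_nonneg (x t)⟩⟩
  refine (hP.isCompact_setOf_dotProduct_mulVec_le (V (x 0))).tendsto_nhds_of_unique_mapClusterPt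
    (eventually_atTop.2 ⟨0, fun t ht => hVx ht⟩) fun y _ hy => ?_
  let z : ℝ → Fin n → ℝ := fun s => exp (s • T) y
  have hz : ∀ s, HasDerivAt z (A *ᵥ z s) s := hasDerivAt_exp_smul_apply T y
  have hVz : ∀ s, V (z s) = L := apply_eq_of_mapClusterPt_of_tendsto_comp
    (fun s => (exp (s • T)).continuous) (eq_exp_smul_apply_of_hasDerivAt T hx) hV hL hy
  have hCz : ∀ s, C *ᵥ z s = 0 := fun s => by
    have hVdot : z s ⬝ᵥ (Aᵀ * P + P * A) *ᵥ z s = 0 :=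
      (hasDerivAt_dotProduct_mulVec_self A P (hz s)).unique
        (by simpa [V, hVz] using hasDerivAt_const s L)
    exact dotProduct_self_eq_zero.1 (by nlinarith [hCsq (z s), hdiss (z s)])
  simpa [z] using hinv z hz hCz 0
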